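/- The automorphism phi carries the colon ideal K : I onto the colon ideal K' : I; that is, phi(K : I) = K' : I as ideals of R'. -/

import Mathlib

open MvPolynomial

noncomputable section

/- The polynomial ring `R' = R0[L11, L12, L21, L22, L31, L32, d0, A1, A2, A3, B, e1, e2]`,
with the thirteen indeterminates indexed as
`0 ↦ L11, 1 ↦ L12, 2 ↦ L21, 3 ↦ L22, 4 ↦ L31, 5 ↦ L32, 6 ↦ d0, 7 ↦ A1, 8 ↦ A2,
9 ↦ A3, 10 ↦ B, 11 ↦ e1, 12 ↦ e2`. -/

variable (R0 : Type*) [CommRing R0]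

/-- `d1 = L21*L32 - L22*L31`. -/
def d1 : MvPolynomial (Fin 13) R0 := X 2 * X 5 - X 3 * X 4

/-- `d2 = -(L11*L32 - L12*L31)`. -/
def d2 : MvPolynomial (Fin 13) R0 := -(X 0 * X 5 - X 1 * X 4)

/-- `d3 = L11*L22 - L12*L21`. -/
def d3 : MvPolynomial (Fin 13) R0 := X 0 * X 3 - X 1 * X 2

/-- `n1 = d0*A1 + d1`. -/
def n1 : MvPolynomial (Fin 13) R0 := X 6 * X 7 + d1 R0

/-- `n2 = d0*A2 + d2`. -/
def n2 : MvPolynomial (Fin 13) R0 := X 6 * X 8 + d2 R0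

/-- `n3 = d0*A3 + d3*B`. -/
def n3 : MvPolynomial (Fin 13) R0 := X 6 * X 9 + d3 R0 * X 10

/-- The ideal `I = (d0, d1, d2, d3)R'`. -/
def Iideal : Ideal (MvPolynomial (Fin 13) R0) := Ideal.span {X 6, d1 R0, d2 R0, d3 R0}

/-- The ideal `K = (n1, n2, n3)R'`. -/
def Kideal : Ideal (MvPolynomial (Fin 13) R0) := Ideal.span {n1 R0, n2 R0, n3 R0}

/-- The ideal `K' = (n1 + d3*e1, n2 + d3*e2, n3)R'`. -/
def K'ideal : Ideal (MvPolynomial (Fin 13) R0) :=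
  Ideal.span {n1 R0 + d3 R0 * X 11, n2 R0 + d3 R0 * X 12, n3 R0}

/-- The `R0`-algebra automorphism `φ` of `R'` fixing every variable except
`L31 ↦ L31 - e1*L11 - e2*L21` and `L32 ↦ L32 - e1*L12 - e2*L22`. -/
def phi : MvPolynomial (Fin 13) R0 →ₐ[R0] MvPolynomial (Fin 13) R0 :=
  aeval ![X 0, X 1, X 2, X 3,
          X 4 - X 11 * X 0 - X 12 * X 2,
          X 5 - X 11 * X 1 - X 12 * X 3,
          X 6, X 7, X 8, X 9, X 10, X 11, X 12]

/-!
A ring automorphism commutes with forming colon ideals, so it suffices that `φ` is invertible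
(its inverse adds back `e1*L1j + e2*L2j` to `L3j`), that `φ(K) = K'`, and that `φ(I) = I`.
The last two hold because `φ` fixes `d0`, `d3`, `n3` and changes `d1`, `d2`, `n1`, `n2` exactly by
`d3*e1` and `d3*e2`, which lie in `I`.
-/

namespace Ideal

variable {R S : Type*} [CommRing R] [CommRing S]

theorem map_colon_of_bijective {F : Type*} [FunLike F R S] [RingHomClass F R S] {f : F}
    (hf : Function.Bijective f) (N J : Ideal R) :
    (N.colon J).map f = (N.map f).colon (J.map f) := by
  set e := RingEquiv.ofBijective f hf
  change (N.colon J).map (e : R →+* S) = (N.map (e : R →+* S)).colon (J.map (e : R →+* S))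
  ext x
  simp only [map_comap_of_equiv, mem_comap, Submodule.mem_colon, SetLike.mem_coe, smul_eq_mul]
  rw [e.symm.surjective.forall]
  simp

theorem span_insert_add_mul {s : Set R} {b d : R} (x : R) (hd : d ∈ span s) :
    span (insert (b + d * x) s) = span (insert b s) := by
  have hd' : ∀ t, d ∈ span (insert t s) := fun t => span_mono (Set.subset_insert _ _) hd
  refine le_antisymm (span_le.mpr (Set.insert_subset_iff.mpr ⟨?_, ?_⟩))
    (span_le.mpr (Set.insert_subset_iff.mpr ⟨?_, ?_⟩))
  · exact add_mem (subset_span (Set.mem_insert _ _)) (mul_mem_right _ _ (hd' b))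
  · exact (Set.subset_insert _ _).trans subset_span
  · simpa using sub_mem (subset_span (Set.mem_insert (b + d * x) s)) (mul_mem_right x _ (hd' _))
  · exact (Set.subset_insert _ _).trans subset_span

end Ideal

def phiInv : MvPolynomial (Fin 13) R0 →ₐ[R0] MvPolynomial (Fin 13) R0 :=
  aeval ![X 0, X 1, X 2, X 3,
          X 4 + X 11 * X 0 + X 12 * X 2,
          X 5 + X 11 * X 1 + X 12 * X 3,
          X 6, X 7, X 8, X 9, X 10, X 11, X 12]

theorem phiInv_comp_phi : (phiInv R0).comp (phi R0) = AlgHom.id R0 _ := by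
  ext i
  fin_cases i <;> simp [phi, phiInv] <;> ring

theorem phi_comp_phiInv : (phi R0).comp (phiInv R0) = AlgHom.id R0 _ := by
  ext i
  fin_cases i <;> simp [phi, phiInv] <;> ring

theorem phi_bijective : Function.Bijective (phi R0) :=
  Function.bijective_iff_has_inverse.mpr
    ⟨phiInv R0, AlgHom.congr_fun (phiInv_comp_phi R0), AlgHom.congr_fun (phi_comp_phiInv R0)⟩

theorem phi_X_six : phi R0 (X 6) = X 6 := by
  simp [phi]

theorem phi_d1 : phi R0 (d1 R0) = d1 R0 + d3 R0 * X 11 := by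
  simp [phi, d1, d3]
  ring

theorem phi_d2 : phi R0 (d2 R0) = d2 R0 + d3 R0 * X 12 := by
  simp [phi, d2, d3]
  ring

theorem phi_d3 : phi R0 (d3 R0) = d3 R0 := by
  simp [phi, d3]

theorem phi_n1 : phi R0 (n1 R0) = n1 R0 + d3 R0 * X 11 := by
  simp [phi, n1, d1, d3]
  ring

theorem phi_n2 : phi R0 (n2 R0) = n2 R0 + d3 R0 * X 12 := by
  simp [phi, n2, d2, d3]
  ring

theorem phi_n3 : phi R0 (n3 R0) = n3 R0 := by
  simp [phi, n3, d3]

theorem map_phi_Kideal : (Kideal R0).map (phi R0) = K'ideal R0 := by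
  simp only [Kideal, K'ideal, Ideal.map_span, Set.image_insert_eq, Set.image_singleton,
    phi_n1, phi_n2, phi_n3]

theorem map_phi_Iideal : (Iideal R0).map (phi R0) = Iideal R0 := by
  have hd3 : ∀ a b : MvPolynomial (Fin 13) R0, d3 R0 ∈ Ideal.span {a, b, d3 R0} :=
    fun _ _ => Ideal.subset_span (by simp)
  simp only [Iideal, Ideal.map_span, Set.image_insert_eq, Set.image_singleton,
    phi_X_six, phi_d1, phi_d2, phi_d3]
  calc Ideal.span {X 6, d1 R0 + d3 R0 * X 11, d2 R0 + d3 R0 * X 12, d3 R0}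
      = Ideal.span {d1 R0 + d3 R0 * X 11, X 6, d2 R0 + d3 R0 * X 12, d3 R0} := by
        rw [Set.insert_comm]
    _ = Ideal.span {d2 R0 + d3 R0 * X 12, d1 R0, X 6, d3 R0} := by
        rw [Ideal.span_insert_add_mul _ (hd3 _ _), Set.insert_comm (X 6), Set.insert_comm (d1 R0)]
    _ = Ideal.span {X 6, d1 R0, d2 R0, d3 R0} := by
        rw [Ideal.span_insert_add_mul _ (hd3 _ _), Set.insert_comm (d2 R0),
          Set.insert_comm (d2 R0), Set.insert_comm (d1 R0)]

theorem phi_maps_colon_ideal :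
    Ideal.map (phi R0) (Submodule.colon (Kideal R0) (Iideal R0)) =
      Submodule.colon (K'ideal R0) (Iideal R0) := by
  rw [Ideal.map_colon_of_bijective (phi_bijective R0), map_phi_Kideal, map_phi_Iideal]

end
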